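/- arXiv:2411.02522 — 3 statements merged into one kernel-verified Lean document; each statement's English description precedes it below -/
import Mathlib

section
/- The Fourier-type double-integral identity 1/x = (i/√(2π)) ∫₀^∞ dy ∫_{-∞}^∞ dz · z e^{-z²/2} e^{-ixyz} holds for every nonzero real x. -/
open MeasureTheory

open Complex in
lemma inner_gaussian_int (w : ℝ) :
    (∫ z : ℝ, (z : ℂ) * Complex.exp (-(z : ℂ) ^ 2 / 2) * Complex.exp (-Complex.I * w * z))
      = -Complex.I * w * Real.sqrt (2 * Real.pi) * Complex.exp (-(w : ℂ) ^ 2 / 2) := by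
  set c : ℂ := -Complex.I * w with hc
  have hb : ((-(1/2) : ℂ)).re < 0 := by norm_num
  set g : ℂ → ℂ := fun u => -(1/2 : ℂ) * u ^ 2 + c * u + 0 with hg
  have hgd : ∀ u : ℂ, HasDerivAt g (-u + c) u := by
    intro u
    have h1 : HasDerivAt (fun u : ℂ => -(1/2 : ℂ) * u ^ 2) (-(1/2 : ℂ) * (2 * u)) u := by
      simpa using (hasDerivAt_pow 2 u).const_mul (-(1/2 : ℂ))
    have h2 : HasDerivAt (fun u : ℂ => c * u) c u := by
      simpa using (hasDerivAt_id u).const_mul c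
    have := (h1.add h2).add_const (0 : ℂ)
    have e : -u + c = -(1/2 : ℂ) * (2 * u) + c := by ring
    rw [e]; exact this
  have hderiv : ∀ z : ℝ, HasDerivAt (fun z : ℝ => Complex.exp (g z))
      ((-(z : ℂ) + c) * Complex.exp (g z)) z := by
    intro z
    simpa [mul_comm] using ((hgd z).cexp).comp_ofReal
  have hf : Integrable (fun z : ℝ => Complex.exp (g z)) := integrable_cexp_quadratic' hb c 0
  have hnorm : ∀ z : ℝ, ‖(z : ℂ) * Complex.exp (g z)‖ = |z| * Real.exp (-(1/2) * z ^ 2) := by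
    intro z
    rw [norm_mul, Complex.norm_real, Real.norm_eq_abs, Complex.norm_exp]
    congr 2
    simp [hg, hc, ← Complex.ofReal_pow]
  have hzf : Integrable (fun z : ℝ => (z : ℂ) * Complex.exp (g z)) := by
    refine ⟨(Complex.continuous_ofReal.mul ?_).aestronglyMeasurable, ?_⟩
    · exact Complex.continuous_exp.comp (by fun_prop)
    · rw [← hasFiniteIntegral_norm_iff]
      have : Integrable (fun z : ℝ => |z * Real.exp (-(1/2) * z ^ 2)|) :=
        (integrable_mul_exp_neg_mul_sq (by norm_num : (0:ℝ) < 1/2)).abs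
      refine this.hasFiniteIntegral.congr (Filter.Eventually.of_forall fun z => ?_)
      show |z * Real.exp (-(1/2) * z ^ 2)| = ‖(z:ℂ) * Complex.exp (g z)‖
      rw [hnorm z, abs_mul, Real.abs_exp]
  have hf' : Integrable (fun z : ℝ => (-(z : ℂ) + c) * Complex.exp (g z)) := by
    have := (hzf.neg).add (hf.const_mul c)
    refine this.congr (Filter.Eventually.of_forall fun z => ?_)
    simp only [Pi.add_apply, Pi.neg_apply]
    ring
  have hzero : (∫ z : ℝ, (-(z : ℂ) + c) * Complex.exp (g z)) = 0 :=
    integral_eq_zero_of_hasDerivAt_of_integrable hderiv hf' hf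
  have hsplit : (∫ z : ℝ, (-(z : ℂ) + c) * Complex.exp (g z))
      = -(∫ z : ℝ, (z : ℂ) * Complex.exp (g z)) + c * ∫ z : ℝ, Complex.exp (g z) := by
    have e1 : (∫ z : ℝ, (-(z : ℂ) + c) * Complex.exp (g z))
        = ∫ z : ℝ, (-((z : ℂ) * Complex.exp (g z)) + c * Complex.exp (g z)) :=
      integral_congr_ae (Filter.Eventually.of_forall fun z => by ring)
    have hneg : Integrable (fun z : ℝ => -((z : ℂ) * Complex.exp (g z))) := hzf.neg
    rw [e1, integral_add hneg (hf.const_mul c), integral_neg, integral_const_mul]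
  have hmain : (∫ z : ℝ, (z : ℂ) * Complex.exp (g z)) = c * ∫ z : ℝ, Complex.exp (g z) := by
    have h := hsplit.symm.trans hzero
    linear_combination -h
  have hgauss : (∫ z : ℝ, Complex.exp (g z))
      = (Real.sqrt (2 * Real.pi) : ℂ) * Complex.exp (-(w : ℂ) ^ 2 / 2) := by
    rw [hg, integral_cexp_quadratic hb c 0]
    congr 1
    · have h2π : (0:ℝ) ≤ 2 * Real.pi := by positivity
      have hbase : (Real.pi : ℂ) / -(-(1/2)) = ((2 * Real.pi : ℝ) : ℂ) := by push_cast; ring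
      rw [hbase, Real.sqrt_eq_rpow, Complex.ofReal_cpow h2π]
      norm_num
    · congr 1
      rw [hc]
      linear_combination ((w:ℂ)^2/2) * Complex.I_sq
  have heq : ∀ z : ℝ, (z : ℂ) * Complex.exp (-(z : ℂ) ^ 2 / 2) * Complex.exp (-Complex.I * w * z)
      = (z : ℂ) * Complex.exp (g z) := by
    intro z
    rw [mul_assoc, ← Complex.exp_add]
    congr 2
    rw [hg, hc]
    push_cast
    ring
  simp_rw [hc, heq]
  rw [hmain, hgauss, hc]
  ring

/-- The Fourier-type double-integral identity
`1/x = (i/√(2π)) ∫₀^∞ dy ∫_{-∞}^∞ dz · z e^{-z²/2} e^{-ixyz}` for every nonzero real `x`. -/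
theorem stmt6 (x : ℝ) (hx : x ≠ 0) :
    (1 / (x : ℂ)) = (Complex.I / Real.sqrt (2 * Real.pi)) *
      ∫ y in Set.Ioi (0:ℝ), ∫ z : ℝ,
        (z : ℂ) * Complex.exp (-(z : ℂ) ^ 2 / 2) *
          Complex.exp (-Complex.I * x * y * z) := by
  have hinner : ∀ y : ℝ, (∫ z : ℝ, (z : ℂ) * Complex.exp (-(z : ℂ) ^ 2 / 2) *
      Complex.exp (-Complex.I * x * y * z))
      = -Complex.I * (x * y : ℝ) * Real.sqrt (2 * Real.pi)
        * Complex.exp (-((x * y : ℝ) : ℂ) ^ 2 / 2) := by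
    intro y
    rw [← inner_gaussian_int (x * y)]
    congr 1; ext z
    push_cast
    ring_nf
  simp_rw [hinner]
  have hre : (0:ℝ) < (((x:ℂ) ^ 2 / 2)).re := by
    simp [← Complex.ofReal_pow]
    positivity
  have houter : (∫ y in Set.Ioi (0:ℝ), -Complex.I * (x * y : ℝ) * Real.sqrt (2 * Real.pi)
        * Complex.exp (-((x * y : ℝ) : ℂ) ^ 2 / 2))
      = (-Complex.I * x * Real.sqrt (2 * Real.pi)) * ((2 * ((x:ℂ)^2/2))⁻¹) := by
    rw [← integral_mul_cexp_neg_mul_sq hre, ← integral_const_mul]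
    congr 1; ext y
    push_cast
    ring_nf
  rw [houter, show (2 * ((x:ℂ)^2/2)) = (x:ℂ)^2 by ring]
  have hs : (Real.sqrt (2 * Real.pi) : ℂ) ≠ 0 := by
    simp only [ne_eq, Complex.ofReal_eq_zero]
    positivity
  have hxc : (x:ℂ) ≠ 0 := Complex.ofReal_ne_zero.mpr hx
  have h2 : ((Real.sqrt 2 : ℝ) : ℂ) ≠ 0 := by
    simp only [ne_eq, Complex.ofReal_eq_zero]; positivity
  have hpi : ((Real.sqrt Real.pi : ℝ) : ℂ) ≠ 0 := by
    simp only [ne_eq, Complex.ofReal_eq_zero]; positivity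
  field_simp
  ring_nf
  simp [Complex.I_sq]
end

section
/- The scheduling function f(t) = (κ/(κ-1))·[1 - (1 + t(κ^{p-1} - 1))^{1/(1-p)}] solves the initial value problem f'(t) = c_p·(1 - f(t) + f(t)/κ)^p with f(0) = 0 and satisfies f(1) = 1, where c_p = (κ^{p-1}-1)·κ/((p-1)(κ-1)). -/
/-- The AQC(p) scheduling function
`f(t) = (κ/(κ-1))·[1 - (1 + t(κ^{p-1} - 1))^{1/(1-p)}]` solves the IVP
`f'(t) = c_p·(1 - f(t) + f(t)/κ)^p`, `f(0) = 0`, and satisfies `f(1) = 1`,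
where `c_p = (κ^{p-1}-1)·κ/((p-1)(κ-1))`. -/
theorem stmt7 (κ p : ℝ) (hκ : 1 < κ) (hp1 : 1 < p) (hp2 : p < 2)
    (c : ℝ) (hc : c = (κ ^ (p - 1) - 1) * κ / ((p - 1) * (κ - 1)))
    (f : ℝ → ℝ)
    (hf : ∀ t, f t = κ / (κ - 1) *
      (1 - (1 + t * (κ ^ (p - 1) - 1)) ^ (1 / (1 - p)))) :
    f 0 = 0 ∧ f 1 = 1 ∧
    ∀ t ∈ Set.Icc (0:ℝ) 1, HasDerivAt f (c * (1 - f t + f t / κ) ^ p) t := by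
  have hκ0 : (0:ℝ) < κ := by linarith
  have ha : 1 < κ ^ (p - 1) := by
    rw [Real.one_lt_rpow_iff_of_pos hκ0]; left; exact ⟨hκ, by linarith⟩
  have hκ1 : κ - 1 ≠ 0 := by linarith
  have hp1' : (1:ℝ) - p ≠ 0 := by linarith
  refine ⟨?_, ?_, ?_⟩
  · rw [hf]; simp
  · rw [hf]
    have h1 : 1 + 1 * (κ ^ (p - 1) - 1) = κ ^ (p - 1) := by ring
    rw [h1, ← Real.rpow_mul hκ0.le]
    have h2 : (p - 1) * (1 / (1 - p)) = -1 := by field_simp; ring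
    rw [h2, Real.rpow_neg_one]
    field_simp
  · intro t ht
    have hg : 0 < 1 + t * (κ ^ (p - 1) - 1) := by nlinarith [ht.1, ht.2]
    set a := κ ^ (p - 1) - 1 with hadef
    have hd1 : HasDerivAt (fun t : ℝ => 1 + t * a) a t := by
      simpa using ((hasDerivAt_id t).mul_const a).const_add 1
    have hd2 : HasDerivAt (fun t : ℝ => (1 + t * a) ^ (1 / (1 - p)))
        (a * (1 / (1 - p)) * (1 + t * a) ^ (1 / (1 - p) - 1)) t :=
      hd1.rpow_const (Or.inl (ne_of_gt hg))
    have hd3 : HasDerivAt f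
        (κ / (κ - 1) * (-(a * (1 / (1 - p)) * (1 + t * a) ^ (1 / (1 - p) - 1)))) t := by
      have h := ((hd2.const_sub 1).const_mul (κ / (κ - 1)))
      have heq : (fun t : ℝ => κ / (κ - 1) * (1 - (1 + t * a) ^ (1 / (1 - p)))) = f := by
        funext s; rw [hf]
      rw [heq] at h
      simpa using h
    convert hd3 using 1
    have hft : 1 - f t + f t / κ = (1 + t * a) ^ (1 / (1 - p)) := by
      rw [hf]; field_simp; ring
    rw [hft, ← Real.rpow_mul hg.le]
    have hexp : 1 / (1 - p) * p = 1 / (1 - p) - 1 := by field_simp; ring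
    rw [hexp]
    generalize (1 + t * a) ^ (1 / (1 - p) - 1) = G
    rw [hc]
    have hp0 : p - 1 ≠ 0 := by linarith
    field_simp
    ring
end

section
/- The eigenstate-filtering polynomial R_ℓ(x; Δ) := T_ℓ(-1 + 2(x² - Δ²)/(1 - Δ²)) / T_ℓ(-1 + 2(-Δ²)/(1 - Δ²)) satisfies R_ℓ(0; Δ) = 1 and |R_ℓ(x; Δ)| ≤ 1/|T_ℓ(1 + 2Δ²/(1 - Δ²))| for all x with Δ ≤ |x| ≤ 1. -/
open Polynomial

lemma T_parity (n : ℕ) (x : ℝ) :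
    (Polynomial.Chebyshev.T ℝ n).eval (-x) = (-1)^n * (Polynomial.Chebyshev.T ℝ n).eval x := by
  induction n using Nat.twoStepInduction with
  | zero => simp [Polynomial.Chebyshev.T_zero]
  | one => simp [Polynomial.Chebyshev.T_one]
  | more n ih2 ih1 =>
    have h : ((n : ℤ) + 2) = ((n + 2 : ℕ) : ℤ) := by push_cast; ring
    have h1 : ((n : ℤ) + 1) = ((n + 1 : ℕ) : ℤ) := by push_cast; ring
    have := Polynomial.Chebyshev.T_add_two ℝ (n : ℤ)
    rw [h, h1] at this
    rw [this]
    simp only [Polynomial.eval_sub, Polynomial.eval_mul, Polynomial.eval_ofNat,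
      Polynomial.eval_X, ih1, ih2]
    ring

lemma T_ge_one (n : ℕ) (x : ℝ) (hx : 1 ≤ x) :
    1 ≤ (Polynomial.Chebyshev.T ℝ n).eval x ∧
    (Polynomial.Chebyshev.T ℝ n).eval x ≤ (Polynomial.Chebyshev.T ℝ (n+1)).eval x := by
  induction n with
  | zero => simp [Polynomial.Chebyshev.T_zero, Polynomial.Chebyshev.T_one]; linarith
  | succ n ih =>
    obtain ⟨h1, h2⟩ := ih
    have key := Polynomial.Chebyshev.T_add_two ℝ (n : ℤ)
    have hkey : (Polynomial.Chebyshev.T ℝ ((n:ℤ)+2)).eval x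
        = 2 * x * (Polynomial.Chebyshev.T ℝ ((n:ℤ)+1)).eval x
          - (Polynomial.Chebyshev.T ℝ (n : ℤ)).eval x := by
      rw [key]; simp
    have e2 : ((n:ℤ)+1)+1 = (n:ℤ)+2 := by ring
    push_cast
    constructor
    · linarith
    · rw [e2, hkey]; nlinarith

lemma T_abs_le_one (n : ℕ) (y : ℝ) (h1 : -1 ≤ y) (h2 : y ≤ 1) :
    |(Polynomial.Chebyshev.T ℝ n).eval y| ≤ 1 := by
  have : y = Real.cos (Real.arccos y) := (Real.cos_arccos h1 h2).symm
  rw [this, Polynomial.Chebyshev.T_real_cos]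
  exact Real.abs_cos_le_one _

/-- The eigenstate-filtering polynomial
`R_ℓ(x; Δ) = T_ℓ(-1 + 2(x²-Δ²)/(1-Δ²)) / T_ℓ(-1 - 2Δ²/(1-Δ²))` satisfies `R_ℓ(0; Δ) = 1`
and `|R_ℓ(x; Δ)| ≤ 1/|T_ℓ(1 + 2Δ²/(1-Δ²))|` for all `Δ ≤ |x| ≤ 1`. -/
theorem stmt13 (ℓ : ℕ) (Δ : ℝ) (hΔ0 : 0 < Δ) (hΔ1 : Δ < 1)
    (R : ℝ → ℝ)
    (hR : ∀ x, R x =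
      (Polynomial.Chebyshev.T ℝ ℓ).eval (-1 + 2 * (x ^ 2 - Δ ^ 2) / (1 - Δ ^ 2)) /
      (Polynomial.Chebyshev.T ℝ ℓ).eval (-1 + 2 * (-Δ ^ 2) / (1 - Δ ^ 2))) :
    R 0 = 1 ∧
    ∀ x : ℝ, Δ ≤ |x| → |x| ≤ 1 →
      |R x| ≤ 1 / |(Polynomial.Chebyshev.T ℝ ℓ).eval (1 + 2 * Δ ^ 2 / (1 - Δ ^ 2))| := by
  have hden : 0 < 1 - Δ ^ 2 := by nlinarith
  set c : ℝ := 1 + 2 * Δ ^ 2 / (1 - Δ ^ 2) with hc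
  have hc1 : 1 ≤ c := by
    rw [hc]
    have : 0 ≤ 2 * Δ ^ 2 / (1 - Δ ^ 2) := by positivity
    linarith
  have hTc : 1 ≤ (Polynomial.Chebyshev.T ℝ ℓ).eval c := (T_ge_one ℓ c hc1).1
  have harg : -1 + 2 * (-Δ ^ 2) / (1 - Δ ^ 2) = -c := by
    rw [hc, mul_neg, neg_div, neg_add]
  have hdenval : (Polynomial.Chebyshev.T ℝ ℓ).eval (-1 + 2 * (-Δ ^ 2) / (1 - Δ ^ 2))
      = (-1)^ℓ * (Polynomial.Chebyshev.T ℝ ℓ).eval c := by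
    rw [harg, T_parity]
  have habs : |(Polynomial.Chebyshev.T ℝ ℓ).eval (-1 + 2 * (-Δ ^ 2) / (1 - Δ ^ 2))|
      = |(Polynomial.Chebyshev.T ℝ ℓ).eval c| := by
    rw [hdenval, abs_mul, abs_pow, abs_neg, abs_one, one_pow, one_mul]
  have hne : (Polynomial.Chebyshev.T ℝ ℓ).eval (-1 + 2 * (-Δ ^ 2) / (1 - Δ ^ 2)) ≠ 0 := by
    intro h
    rw [h, abs_zero] at habs
    have : |(Polynomial.Chebyshev.T ℝ ℓ).eval c| ≥ 1 := le_trans hTc (le_abs_self _)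
    linarith
  constructor
  · rw [hR 0]
    rw [show (0:ℝ)^2 - Δ^2 = -Δ^2 by ring]
    exact div_self hne
  · intro x hx1 hx2
    rw [hR x, abs_div, habs]
    have hx0 : 0 ≤ |x| := abs_nonneg x
    have hxsq : Δ ^ 2 ≤ x ^ 2 := by
      rw [← sq_abs x]; nlinarith
    have hxsq1 : x ^ 2 ≤ 1 := by
      rw [← sq_abs x]; nlinarith
    set a : ℝ := -1 + 2 * (x ^ 2 - Δ ^ 2) / (1 - Δ ^ 2) with ha
    have ha1 : -1 ≤ a := by
      rw [ha]
      have : 0 ≤ 2 * (x ^ 2 - Δ ^ 2) / (1 - Δ ^ 2) :=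
        div_nonneg (by nlinarith) (le_of_lt hden)
      linarith
    have ha2 : a ≤ 1 := by
      rw [ha]
      have : 2 * (x ^ 2 - Δ ^ 2) / (1 - Δ ^ 2) ≤ 2 := by
        rw [div_le_iff₀ hden]; nlinarith
      linarith
    have hnum := T_abs_le_one ℓ a ha1 ha2
    have hpos : 0 < |(Polynomial.Chebyshev.T ℝ ℓ).eval c| :=
      lt_of_lt_of_le one_pos (le_trans hTc (le_abs_self _))
    gcongr
end
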